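/- arXiv:2006.09361 — 2 statements merged into one kernel-verified Lean document; each statement's English description precedes it below -/
import Mathlib

section
/- Let h : ℝ^d → ℝ have ℓ-Lipschitz gradient, and let τ > 0. Then for all x ∈ ℝ^d, ‖∇h_τ(x) − ∇h(x)‖² ≤ (τ²/4) ℓ² (d+3)³, where h_τ(x) = E_ν[h(x + τν)] is the Gaussian smoothed function. -/
open MeasureTheory ProbabilityTheory

/-- The standard Gaussian measure `N(0, I_d)` on `ℝ^d`. -/
noncomputable def stdGaussian (d : ℕ) : Measure (EuclideanSpace ℝ (Fin d)) :=
  (Measure.pi fun _ : Fin d => gaussianReal 0 1).map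
    (EuclideanSpace.equiv (Fin d) ℝ).symm

/-!
Differentiating under the integral sign gives `∇h_τ(x) = E[∇h(x + τν)]`; this is legitimate
because a Lipschitz gradient grows at most linearly and `h` at most quadratically, while `ν` has a
finite second moment. Hence `‖∇h_τ(x) - ∇h(x)‖ ≤ ℓ |τ| E‖ν‖`, and `(E‖ν‖)² ≤ E‖ν‖² = d`, which is
well below `(d + 3)³ / 4`.
-/

open scoped NNReal RealInnerProductSpace

section
variable {F : Type*} [NormedAddCommGroup F] [InnerProductSpace ℝ F] [CompleteSpace F]

theorem norm_gradient_sub_gradient (f g : F → ℝ) (x y : F) :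
    ‖gradient f x - gradient g y‖ = ‖fderiv ℝ f x - fderiv ℝ g y‖ := by
  rw [gradient, gradient, ← map_sub, LinearIsometryEquiv.norm_map]

theorem lipschitzWith_fderiv_of_gradient {f : F → ℝ} {ℓ : ℝ}
    (hlip : ∀ x y, ‖gradient f x - gradient f y‖ ≤ ℓ * ‖x - y‖) :
    LipschitzWith ℓ.toNNReal (fderiv ℝ f) := by
  refine LipschitzWith.of_dist_le_mul fun x y => ?_
  rw [dist_eq_norm, dist_eq_norm, ← norm_gradient_sub_gradient]
  exact (hlip x y).trans (by gcongr; exact Real.le_coe_toNNReal ℓ)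
end

section
variable {E : Type*} [NormedAddCommGroup E] [NormedSpace ℝ E] {h : E → ℝ} {K : ℝ≥0}

theorem norm_fderiv_le_of_lipschitzWith (hlip : LipschitzWith K (fderiv ℝ h)) (x y : E) :
    ‖fderiv ℝ h y‖ ≤ ‖fderiv ℝ h x‖ + K * ‖y - x‖ := by
  have := hlip.dist_le_mul y x
  rw [dist_eq_norm, dist_eq_norm] at this
  linarith [norm_le_norm_add_norm_sub' (fderiv ℝ h y) (fderiv ℝ h x)]

theorem norm_sub_le_of_lipschitzWith_fderiv (hdiff : Differentiable ℝ h)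
    (hlip : LipschitzWith K (fderiv ℝ h)) (x y : E) :
    ‖h y - h x‖ ≤ (‖fderiv ℝ h x‖ + K * ‖y - x‖) * ‖y - x‖ := by
  refine (convex_closedBall x ‖y - x‖).norm_image_sub_le_of_norm_fderiv_le
    (fun z _ => hdiff z) (fun z hz => ?_) (Metric.mem_closedBall_self (norm_nonneg _))
    (by rw [Metric.mem_closedBall, dist_eq_norm])
  rw [Metric.mem_closedBall, dist_eq_norm] at hz
  exact (norm_fderiv_le_of_lipschitzWith hlip x z).trans (by gcongr)

variable [MeasurableSpace E] [BorelSpace E] {μ : Measure E}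

theorem integrable_comp_add_smul [IsFiniteMeasure μ] (hdiff : Differentiable ℝ h)
    (hlip : LipschitzWith K (fderiv ℝ h)) (hμ : MemLp id 2 μ) (x : E) (τ : ℝ) :
    Integrable (fun ν => h (x + τ • ν)) μ := by
  have hint1 : Integrable (fun ν => ‖ν‖) μ := (hμ.integrable one_le_two).norm
  have hint2 : Integrable (fun ν => ‖ν‖ ^ 2) μ := hμ.integrable_norm_pow two_ne_zero
  refine Integrable.mono'
    (((integrable_const |h x|).add (hint1.const_mul (‖fderiv ℝ h x‖ * |τ|))).add
      (hint2.const_mul (K * τ ^ 2)))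
    (hdiff.continuous.comp (continuous_const.add (continuous_const_smul τ))).aestronglyMeasurable
    (ae_of_all _ fun ν => ?_)
  have hgrowth := norm_sub_le_of_lipschitzWith_fderiv hdiff hlip x (x + τ • ν)
  rw [add_sub_cancel_left, norm_smul, Real.norm_eq_abs τ] at hgrowth
  calc ‖h (x + τ • ν)‖ ≤ ‖h x‖ + ‖h (x + τ • ν) - h x‖ := norm_le_norm_add_norm_sub' _ _
    _ ≤ |h x| + (‖fderiv ℝ h x‖ + K * (|τ| * ‖ν‖)) * (|τ| * ‖ν‖) := by
      rw [Real.norm_eq_abs]; gcongr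
    _ = _ := by simp only [Pi.add_apply]; rw [← sq_abs τ]; ring

variable [SecondCountableTopology E]

theorem integrable_fderiv_comp_add_smul [IsFiniteMeasure μ] (hlip : LipschitzWith K (fderiv ℝ h))
    (hμ : Integrable (fun ν => ‖ν‖) μ) (x : E) (τ : ℝ) :
    Integrable (fun ν => fderiv ℝ h (x + τ • ν)) μ := by
  refine Integrable.mono' ((integrable_const ‖fderiv ℝ h x‖).add (hμ.const_mul (K * |τ|)))
    (hlip.continuous.comp (continuous_const.add (continuous_const_smul τ))).aestronglyMeasurable
    (ae_of_all _ fun ν => ?_)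
  have := norm_fderiv_le_of_lipschitzWith hlip x (x + τ • ν)
  rw [add_sub_cancel_left, norm_smul, Real.norm_eq_abs] at this
  simp only [Pi.add_apply]
  linarith

theorem hasFDerivAt_integral_comp_add_smul [IsFiniteMeasure μ] (hdiff : Differentiable ℝ h)
    (hlip : LipschitzWith K (fderiv ℝ h)) (hμ : MemLp id 2 μ) (x : E) (τ : ℝ) :
    HasFDerivAt (fun z => ∫ ν, h (z + τ • ν) ∂μ) (∫ ν, fderiv ℝ h (x + τ • ν) ∂μ) x := by
  have hint1 : Integrable (fun ν => ‖ν‖) μ := (hμ.integrable one_le_two).norm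
  refine hasFDerivAt_integral_of_dominated_of_fderiv_le (Metric.ball_mem_nhds x one_pos)
    (F' := fun z ν => fderiv ℝ h (z + τ • ν))
    (bound := fun ν => ‖fderiv ℝ h x‖ + K + K * |τ| * ‖ν‖)
    (Filter.Eventually.of_forall fun z => (integrable_comp_add_smul hdiff hlip hμ z τ).1)
    (integrable_comp_add_smul hdiff hlip hμ x τ)
    (integrable_fderiv_comp_add_smul hlip hint1 x τ).1
    (ae_of_all _ fun ν z hz => ?_)
    ((integrable_const _).add (hint1.const_mul _))
    (ae_of_all _ fun ν z _ => ?_)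
  · rw [Metric.mem_ball, dist_eq_norm] at hz
    have hgrad := norm_fderiv_le_of_lipschitzWith hlip x (z + τ • ν)
    have hshift := norm_add_le (z - x) (τ • ν)
    rw [add_sub_right_comm] at hgrad
    rw [norm_smul, Real.norm_eq_abs] at hshift
    nlinarith [K.2]
  · have := (hdiff (z + τ • ν)).hasFDerivAt.comp z ((hasFDerivAt_id z).add_const (τ • ν))
    rwa [ContinuousLinearMap.comp_id] at this

theorem norm_integral_fderiv_comp_add_smul_sub_le [IsProbabilityMeasure μ]
    (hlip : LipschitzWith K (fderiv ℝ h)) (hμ : Integrable (fun ν => ‖ν‖) μ) (x : E) (τ : ℝ) :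
    ‖∫ ν, fderiv ℝ h (x + τ • ν) ∂μ - fderiv ℝ h x‖ ≤ K * |τ| * ∫ ν, ‖ν‖ ∂μ := by
  have hint := integrable_fderiv_comp_add_smul hlip hμ x τ
  calc ‖∫ ν, fderiv ℝ h (x + τ • ν) ∂μ - fderiv ℝ h x‖
      = ‖∫ ν, (fderiv ℝ h (x + τ • ν) - fderiv ℝ h x) ∂μ‖ := by
        rw [integral_sub hint (integrable_const _), integral_const, probReal_univ, one_smul]
    _ ≤ ∫ ν, K * |τ| * ‖ν‖ ∂μ := by
        refine norm_integral_le_of_norm_le (hμ.const_mul _) (ae_of_all _ fun ν => ?_)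
        have := hlip.dist_le_mul (x + τ • ν) x
        rwa [dist_eq_norm, dist_eq_norm, add_sub_cancel_left, norm_smul, Real.norm_eq_abs,
          ← mul_assoc] at this
    _ = K * |τ| * ∫ ν, ‖ν‖ ∂μ := integral_const_mul _ _
end

section
variable {E : Type*} [NormedAddCommGroup E] [InnerProductSpace ℝ E] [FiniteDimensional ℝ E]
  [MeasurableSpace E] [BorelSpace E]

theorem integral_norm_sq_stdGaussian :
    ∫ x, ‖x‖ ^ 2 ∂(ProbabilityTheory.stdGaussian E) = Module.finrank ℝ E := by
  have hmem : MemLp id 2 (ProbabilityTheory.stdGaussian E) := IsGaussian.memLp_two_id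
  have hcov (v : E) : ∫ x, ⟪v, x⟫ ^ 2 ∂(ProbabilityTheory.stdGaussian E) = ‖v‖ ^ 2 := by
    simpa [covarianceBilin_stdGaussian, integral_id_stdGaussian, ← sq, innerSL_apply_apply ℝ,
      real_inner_self_eq_norm_sq] using (covarianceBilin_apply hmem v v).symm
  have hint (v : E) : Integrable (fun x => ⟪v, x⟫ ^ 2) (ProbabilityTheory.stdGaussian E) :=
    (hmem.const_inner v).integrable_sq
  set b := stdOrthonormalBasis ℝ E
  simp_rw [← b.sum_sq_inner_right]
  rw [integral_finsetSum _ fun i _ => hint (b i)]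
  simp [hcov, b.orthonormal.1]

theorem sq_integral_norm_stdGaussian_le :
    (∫ x, ‖x‖ ∂(ProbabilityTheory.stdGaussian E)) ^ 2 ≤ Module.finrank ℝ E := by
  have hvar :=
    variance_eq_sub (IsGaussian.memLp_two_id (μ := ProbabilityTheory.stdGaussian E)).norm
  simp only [id, Pi.pow_apply] at hvar
  rw [← integral_norm_sq_stdGaussian]
  linarith [variance_nonneg (fun x : E => ‖x‖) (ProbabilityTheory.stdGaussian E)]
end

theorem stdGaussian_eq_stdGaussian_euclideanSpace (d : ℕ) :
    stdGaussian d = ProbabilityTheory.stdGaussian (EuclideanSpace ℝ (Fin d)) :=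
  map_pi_eq_stdGaussian

theorem zo_vrgda_stmt5_general (d : ℕ) (h : EuclideanSpace ℝ (Fin d) → ℝ) (ℓ τ : ℝ)
    (hdiff : Differentiable ℝ h)
    (hlip : ∀ x x', ‖gradient h x - gradient h x'‖ ≤ ℓ * ‖x - x'‖) :
    ∀ x, ‖gradient (fun z => ∫ ν, h (z + τ • ν) ∂(stdGaussian d)) x - gradient h x‖ ^ 2 ≤
      τ ^ 2 / 4 * ℓ ^ 2 * ((d : ℝ) + 3) ^ 3 := by
  intro x
  have hK := lipschitzWith_fderiv_of_gradient hlip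
  rw [stdGaussian_eq_stdGaussian_euclideanSpace]
  set μ := ProbabilityTheory.stdGaussian (EuclideanSpace ℝ (Fin d))
  have hμ : MemLp id 2 μ := IsGaussian.memLp_two_id
  rw [norm_gradient_sub_gradient, (hasFDerivAt_integral_comp_add_smul hdiff hK hμ x τ).fderiv]
  have hbound := norm_integral_fderiv_comp_add_smul_sub_le hK (hμ.integrable one_le_two).norm x τ
  have hmoment : (∫ ν, ‖ν‖ ∂μ) ^ 2 ≤ d := by
    simpa using sq_integral_norm_stdGaussian_le (E := EuclideanSpace ℝ (Fin d))
  have hK_sq : (ℓ.toNNReal : ℝ) ^ 2 ≤ ℓ ^ 2 := by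
    rw [Real.coe_toNNReal', ← sq_abs ℓ]
    exact pow_le_pow_left₀ (le_max_right ℓ 0) (max_le (le_abs_self ℓ) (abs_nonneg ℓ)) 2
  have hd : (d : ℝ) ≤ ((d : ℝ) + 3) ^ 3 / 4 := by
    have hd0 : (0 : ℝ) ≤ d := Nat.cast_nonneg d
    nlinarith [pow_nonneg hd0 3, sq_nonneg (d : ℝ)]
  calc _ ≤ (ℓ.toNNReal * |τ| * ∫ ν, ‖ν‖ ∂μ) ^ 2 := pow_le_pow_left₀ (norm_nonneg _) hbound 2
    _ = (ℓ.toNNReal : ℝ) ^ 2 * τ ^ 2 * (∫ ν, ‖ν‖ ∂μ) ^ 2 := by rw [mul_pow, mul_pow, sq_abs]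
    _ ≤ ℓ ^ 2 * τ ^ 2 * d := by gcongr
    _ ≤ τ ^ 2 / 4 * ℓ ^ 2 * ((d : ℝ) + 3) ^ 3 := by
      nlinarith [mul_le_mul_of_nonneg_left hd (mul_nonneg (sq_nonneg ℓ) (sq_nonneg τ))]

/-- If `h : ℝ^d → ℝ` has `ℓ`-Lipschitz gradient and `τ > 0`, then for all `x`,
`‖∇h_τ(x) − ∇h(x)‖² ≤ (τ²/4) ℓ² (d+3)³`, where `h_τ(x) = E_ν[h(x + τν)]`. -/
theorem zo_vrgda_stmt5 (d : ℕ) (h : EuclideanSpace ℝ (Fin d) → ℝ) (ℓ τ : ℝ) (hτ : 0 < τ)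
    (hdiff : Differentiable ℝ h)
    (hlip : ∀ x x', ‖gradient h x - gradient h x'‖ ≤ ℓ * ‖x - x'‖) :
    ∀ x, ‖gradient (fun z => ∫ ν, h (z + τ • ν) ∂(stdGaussian d)) x - gradient h x‖ ^ 2 ≤
      τ ^ 2 / 4 * ℓ ^ 2 * ((d : ℝ) + 3) ^ 3 :=
  zo_vrgda_stmt5_general d h ℓ τ hdiff hlip
end

section
/- Let f : ℝ^{d1} × ℝ^{d2} → ℝ be differentiable with ℓ-Lipschitz gradient and μ-strongly concave in y for every fixed x (0 < μ ≤ ℓ), and let Φ(x) = max_{y} f(x,y) with κ = ℓ/μ. Then for every (x,y) ∈ ℝ^{d1} × ℝ^{d2}: ‖∇Φ(x) − ∇_x f(x,y)‖ ≤ κ ‖∇_y f(x,y)‖. -/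
/-!
Since `∇_y f(x, y*(x)) = 0`, strong concavity gives `μ ‖y - y*(x)‖ ≤ ‖∇_y f(x, y)‖`; together
with the `ℓ`-Lipschitz dependence of `∇_y f` on `x` this makes `y*` a `κ`-Lipschitz map.
Sandwiching `Φ x' - Φ x` between `f(x', y*(x)) - f(x, y*(x))` and `f(x', y*(x')) - f(x, y*(x'))`
and applying the descent lemma to both sides shows that `∇Φ(x) = ∇_x f(x, y*(x))` (Danskin).
Finally `‖∇_x f(x, y*(x)) - ∇_x f(x, y)‖ ≤ ℓ ‖y*(x) - y‖ ≤ κ ‖∇_y f(x, y)‖`.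
-/

open Set Filter Asymptotics InnerProductSpace
open scoped Gradient RealInnerProductSpace Topology

lemma le_mul_of_sq_add_sq_le {a b ℓ d : ℝ} (hℓ : 0 ≤ ℓ) (hd : 0 ≤ d)
    (h : a ^ 2 + b ^ 2 ≤ ℓ ^ 2 * d ^ 2) : a ≤ ℓ * d ∧ b ≤ ℓ * d :=
  ⟨le_of_sq_le_sq (by nlinarith) (by positivity), le_of_sq_le_sq (by nlinarith) (by positivity)⟩

variable {E F : Type*} [NormedAddCommGroup E] [NormedAddCommGroup F]

section InnerProductSpace

variable [InnerProductSpace ℝ E] [CompleteSpace E]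

theorem hasGradientAt_of_abs_sub_sub_inner_le {h : E → ℝ} {g x : E} {C : ℝ}
    (hC : ∀ x', |h x' - h x - ⟪g, x' - x⟫_ℝ| ≤ C * ‖x' - x‖ ^ 2) : HasGradientAt h g x := by
  rw [hasGradientAt_iff_isLittleO]
  have hsq : (fun x' => ‖x' - x‖ ^ 2) =o[𝓝 x] fun x' => x' - x :=
    (isLittleO_norm_pow_id one_lt_two).comp_tendsto (tendsto_sub_nhds_zero_iff.2 tendsto_id)
  refine (IsBigO.of_bound C (Eventually.of_forall fun x' => ?_)).trans_isLittleO hsq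
  simpa [Real.norm_eq_abs] using hC x'

theorem abs_sub_sub_inner_gradient_le {h : E → ℝ} (hd : Differentiable ℝ h) {L : ℝ} (hL : 0 ≤ L)
    {x : E} (hlip : ∀ z, ‖∇ h z - ∇ h x‖ ≤ L * ‖z - x‖) (x' : E) :
    |h x' - h x - ⟪∇ h x, x' - x⟫_ℝ| ≤ L * ‖x' - x‖ ^ 2 := by
  have hball : ∀ z ∈ Metric.closedBall x ‖x' - x‖,
      ‖fderiv ℝ h z - fderiv ℝ h x‖ ≤ L * ‖x' - x‖ := by
    intro z hz
    rw [← toDual_gradient, ← toDual_gradient, ← map_sub, LinearIsometryEquiv.norm_map]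
    exact (hlip z).trans (mul_le_mul_of_nonneg_left (mem_closedBall_iff_norm.1 hz) hL)
  have hmvt :=
    (convex_closedBall x ‖x' - x‖).norm_image_sub_le_of_norm_hasFDerivWithin_le' (y := x')
    (fun z _ => (hd z).hasFDerivAt.hasFDerivWithinAt) hball
    (Metric.mem_closedBall_self (norm_nonneg _)) (by simp [dist_eq_norm])
  rw [← inner_gradient_left, Real.norm_eq_abs] at hmvt
  linarith

theorem IsLocalMax.gradient_eq_zero {h : E → ℝ} {x : E} (hmax : IsLocalMax h x) : ∇ h x = 0 := by
  simp [gradient, hmax.fderiv_eq_zero]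

theorem mul_norm_sub_le_norm_gradient_of_isMaxOn {g : E → ℝ} {μ : ℝ}
    (hconc : ∀ y y', g y ≤ g y' + ⟪∇ g y', y - y'⟫_ℝ - μ / 2 * ‖y - y'‖ ^ 2)
    {y₀ : E} (hmax : IsMaxOn g univ y₀) (y : E) : μ * ‖y - y₀‖ ≤ ‖∇ g y‖ := by
  have hcrit : ∇ g y₀ = 0 := (hmax.isLocalMax univ_mem).gradient_eq_zero
  have h₁ := hconc y y₀
  have h₂ := hconc y₀ y
  rw [hcrit, inner_zero_left] at h₁
  rw [norm_sub_rev] at h₂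
  have hcs : ⟪∇ g y, y₀ - y⟫_ℝ ≤ ‖∇ g y‖ * ‖y - y₀‖ := by
    simpa only [norm_sub_rev y₀ y] using real_inner_le_norm (∇ g y) (y₀ - y)
  have hsq : μ * ‖y - y₀‖ * ‖y - y₀‖ ≤ ‖∇ g y‖ * ‖y - y₀‖ := by nlinarith
  rcases (norm_nonneg (y - y₀)).eq_or_lt with hzero | hpos
  · simp [← hzero]
  · exact le_of_mul_le_mul_right hsq hpos

/-- Danskin's theorem, for a Lipschitz maximiser `ys`. -/
theorem hasGradientAt_apply_argmax {f : E → F → ℝ} {ys : E → F} {ℓ K : ℝ} (hℓ : 0 ≤ ℓ)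
    (hd : ∀ y, Differentiable ℝ fun x => f x y)
    (hlipx : ∀ x x' y, ‖∇ (fun x => f x y) x - ∇ (fun x => f x y) x'‖ ≤ ℓ * ‖x - x'‖)
    (hlipy : ∀ x y y', ‖∇ (fun x => f x y) x - ∇ (fun x => f x y') x‖ ≤ ℓ * ‖y - y'‖)
    (hys : ∀ x, IsMaxOn (f x) univ (ys x)) (hK : ∀ x x', ‖ys x - ys x'‖ ≤ K * ‖x - x'‖) (x : E) :
    HasGradientAt (fun x => f x (ys x)) (∇ (fun x' => f x' (ys x)) x) x := by
  refine hasGradientAt_of_abs_sub_sub_inner_le (C := ℓ * (1 + K)) fun x' => ?_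
  have hlow := abs_le.1 <|
    abs_sub_sub_inner_gradient_le (hd (ys x)) hℓ (fun z => hlipx z x (ys x)) x'
  have hup := abs_le.1 <|
    abs_sub_sub_inner_gradient_le (hd (ys x')) hℓ (fun z => hlipx z x (ys x')) x'
  have hKd : 0 ≤ K * ‖x' - x‖ := (norm_nonneg _).trans (hK x' x)
  have hgrad : ⟪∇ (fun x'' => f x'' (ys x')) x - ∇ (fun x'' => f x'' (ys x)) x, x' - x⟫_ℝ ≤
      ℓ * (K * ‖x' - x‖) * ‖x' - x‖ :=
    calc _ ≤ ‖∇ (fun x'' => f x'' (ys x')) x - ∇ (fun x'' => f x'' (ys x)) x‖ * ‖x' - x‖ :=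
          real_inner_le_norm _ _
      _ ≤ ℓ * (K * ‖x' - x‖) * ‖x' - x‖ := by
        gcongr
        exact (hlipy x (ys x') (ys x)).trans (mul_le_mul_of_nonneg_left (hK x' x) hℓ)
  have hmax₁ : f x' (ys x) ≤ f x' (ys x') := hys x' (mem_univ _)
  have hmax₂ : f x (ys x') ≤ f x (ys x) := hys x (mem_univ _)
  have hcorr : 0 ≤ ℓ * (K * ‖x' - x‖) * ‖x' - x‖ := by positivity
  rw [inner_sub_left] at hgrad
  rw [abs_le]
  constructor <;> linarith

end InnerProductSpace

theorem norm_argmax_sub_le [InnerProductSpace ℝ F] [CompleteSpace F] {f : E → F → ℝ} {ℓ μ : ℝ}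
    (hμ : 0 < μ)
    (hconc : ∀ x y y', f x y ≤ f x y' + ⟪∇ (f x) y', y - y'⟫_ℝ - μ / 2 * ‖y - y'‖ ^ 2)
    (hlip : ∀ x x' y, ‖∇ (f x) y - ∇ (f x') y‖ ≤ ℓ * ‖x - x'‖)
    {ys : E → F} (hys : ∀ x, IsMaxOn (f x) univ (ys x)) (x x' : E) :
    ‖ys x - ys x'‖ ≤ ℓ / μ * ‖x - x'‖ := by
  have hcrit : ∇ (f x') (ys x') = 0 := ((hys x').isLocalMax univ_mem).gradient_eq_zero
  have hmono := mul_norm_sub_le_norm_gradient_of_isMaxOn (hconc x) (hys x) (ys x')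
  have hshift := hlip x x' (ys x')
  rw [hcrit, sub_zero] at hshift
  rw [div_mul_eq_mul_div, le_div_iff₀ hμ, mul_comm, norm_sub_rev]
  exact hmono.trans hshift

/-- under the nonconvex–strongly-concave assumptions, with
`Φ(x) = max_y f(x,y) = f(x, y*(x))`, one has for every `(x,y)`:
`‖∇Φ(x) − ∇_x f(x,y)‖ ≤ κ ‖∇_y f(x,y)‖`, where `κ = ℓ/μ`. -/
theorem zo_vrgda_stmt13 (d1 d2 : ℕ)
    (f : EuclideanSpace ℝ (Fin d1) → EuclideanSpace ℝ (Fin d2) → ℝ)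
    (ℓ μ : ℝ) (hμ : 0 < μ) (hμℓ : μ ≤ ℓ)
    (hdiff : Differentiable ℝ
      (fun p : EuclideanSpace ℝ (Fin d1) × EuclideanSpace ℝ (Fin d2) => f p.1 p.2))
    (hlip : ∀ x x' y y',
      ‖gradient (fun x'' => f x'' y) x - gradient (fun x'' => f x'' y') x'‖ ^ 2 +
          ‖gradient (f x) y - gradient (f x') y'‖ ^ 2 ≤
        ℓ ^ 2 * (‖x - x'‖ ^ 2 + ‖y - y'‖ ^ 2))
    (hconc : ∀ x y y',
      f x y ≤ f x y' + (inner ℝ (gradient (f x) y') (y - y') : ℝ) - μ / 2 * ‖y - y'‖ ^ 2)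
    (ystar : EuclideanSpace ℝ (Fin d1) → EuclideanSpace ℝ (Fin d2))
    (hystar : ∀ x, IsMaxOn (f x) Set.univ (ystar x)) :
    ∀ x y,
      ‖gradient (fun x' => f x' (ystar x')) x - gradient (fun x' => f x' y) x‖ ≤
        ℓ / μ * ‖gradient (f x) y‖ := by
  intro x y
  have hℓ : 0 ≤ ℓ := hμ.le.trans hμℓ
  have hlipx : ∀ x x' y, ‖∇ (fun x'' => f x'' y) x - ∇ (fun x'' => f x'' y) x'‖ ≤ ℓ * ‖x - x'‖ :=
    fun x x' y => (le_mul_of_sq_add_sq_le hℓ (norm_nonneg _) (by simpa using hlip x x' y y)).1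
  have hlipy : ∀ x y y', ‖∇ (fun x'' => f x'' y) x - ∇ (fun x'' => f x'' y') x‖ ≤ ℓ * ‖y - y'‖ :=
    fun x y y' => (le_mul_of_sq_add_sq_le hℓ (norm_nonneg _) (by simpa using hlip x x y y')).1
  have hlipyx : ∀ x x' y, ‖∇ (f x) y - ∇ (f x') y‖ ≤ ℓ * ‖x - x'‖ :=
    fun x x' y => (le_mul_of_sq_add_sq_le hℓ (norm_nonneg _) (by simpa using hlip x x' y y)).2
  have hdx : ∀ y, Differentiable ℝ fun x => f x y :=
    fun y => hdiff.comp (differentiable_id.prodMk (differentiable_const y))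
  have hΦ := hasGradientAt_apply_argmax hℓ hdx hlipx hlipy hystar
    (norm_argmax_sub_le hμ hconc hlipyx hystar) x
  rw [hΦ.gradient]
  calc _ ≤ ℓ * ‖ystar x - y‖ := hlipy x (ystar x) y
    _ ≤ ℓ * (‖∇ (f x) y‖ / μ) := by
      gcongr
      rw [le_div_iff₀ hμ, mul_comm, norm_sub_rev]
      exact mul_norm_sub_le_norm_gradient_of_isMaxOn (hconc x) (hystar x) y
    _ = ℓ / μ * ‖∇ (f x) y‖ := by ring
end
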